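/- arXiv:2509.03415 — 5 statements merged into one kernel-verified Lean document; each statement's English description precedes it below -/
import Mathlib

section
/- For all integers n, k with n ≥ k ≥ 0 and every nonzero real λ, the unsigned new type degenerate Stirling number of the first kind satisfies [n,k]*_λ = ∑_{m=k}^{n} λ^{n-m} · [n,m] · [m,k], where [n,m] and [m,k] denote the classical unsigned Stirling numbers of the first kind. -/
/-!
Put `g(t) = -λ⁻¹ log (1 - λt)`, so that the generating function is `(-log (1 - g(t)))ᵏ / k!`.
The classical expansion `(-log (1 - x))ᵏ / k! = ∑ₙ [n,k] xⁿ / n!` for `|x| < 1` (proved by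
induction on `k`: by the recurrence both sides have derivative
`(-log (1 - x))ᵏ⁻¹ / (k-1)! / (1 - x)` and vanish at `0`) gives
`(-log (1 - g))ᵏ / k! = ∑ₘ [m,k] gᵐ / m!` and `gᵐ / m! = λ⁻ᵐ ∑_N [N,m] (λt)ᴺ / N!`.
For small `t` the resulting double series converges absolutely, so it can be summed over `m`
first; the coefficient of `tᴺ` is then `∑ₘ λᴺ⁻ᵐ [N,m] [m,k] / N!`, and uniqueness of power
series coefficients identifies it with `[N,k]*_λ / N!`.
-/

open Finset

/-- The unsigned Stirling numbers of the first kind, defined by the recurrence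
`⎡n+1, k+1⎤ = n·⎡n, k+1⎤ + ⎡n, k⎤` with `⎡0,0⎤ = 1`. -/
def stirling1 : ℕ → ℕ → ℕ
  | 0, 0 => 1
  | 0, _ + 1 => 0
  | _ + 1, 0 => 0
  | n + 1, k + 1 => n * stirling1 n (k + 1) + stirling1 n k

open Real Topology
open scoped Nat

theorem stirling1_eq_stirlingFirst : ∀ n k : ℕ, stirling1 n k = Nat.stirlingFirst n k
  | 0, 0 | 0, _ + 1 | _ + 1, 0 => rfl
  | n + 1, k + 1 => by
    rw [stirling1, Nat.stirlingFirst_succ_succ, stirling1_eq_stirlingFirst n,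
      stirling1_eq_stirlingFirst n]

theorem Nat.stirlingFirst_le_factorial : ∀ n k : ℕ, stirlingFirst n k ≤ n !
  | 0, 0 | 0, _ + 1 | _ + 1, 0 => by simp
  | n + 1, k + 1 => by
    have h₁ := stirlingFirst_le_factorial n (k + 1)
    have h₂ := stirlingFirst_le_factorial n k
    rw [stirlingFirst_succ_succ, factorial_succ]
    nlinarith

theorem abs_stirlingFirst_div_factorial_le_one (n k : ℕ) :
    |(Nat.stirlingFirst n k / n ! : ℝ)| ≤ 1 := by
  rw [abs_of_nonneg (by positivity), div_le_one (by positivity)]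
  exact_mod_cast Nat.stirlingFirst_le_factorial n k

section PowerSeries

variable {𝕜 : Type*} [NontriviallyNormedField 𝕜] {c c' : ℕ → 𝕜} {f : 𝕜 → 𝕜}

theorem hasFPowerSeriesAt_ofScalars_of_eventually_hasSum
    (h : ∀ᶠ t in 𝓝 0, HasSum (fun n => c n * t ^ n) (f t)) :
    HasFPowerSeriesAt f (FormalMultilinearSeries.ofScalars 𝕜 c) 0 := by
  obtain ⟨ε, hε, hball⟩ := Metric.eventually_nhds_iff_ball.mp h
  obtain ⟨x, hx0, hxε⟩ := NormedField.exists_norm_lt 𝕜 hε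
  have hx : x ∈ Metric.ball 0 ε := by simpa using hxε
  have hradius : (‖x‖₊ : ENNReal) ≤ (FormalMultilinearSeries.ofScalars 𝕜 c).radius := by
    refine FormalMultilinearSeries.le_radius_of_tendsto _ (l := 0) ?_
    simpa [FormalMultilinearSeries.ofScalars_norm, norm_mul, norm_pow] using
      (hball x hx).summable.tendsto_atTop_zero.norm
  refine ⟨‖x‖₊, hradius, by simpa using hx0, fun {y} hy => ?_⟩
  have hy' : y ∈ Metric.ball 0 ε := by
    rw [Metric.mem_ball, dist_zero_right]
    exact lt_trans (by simpa using hy) hxε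
  simpa [FormalMultilinearSeries.ofScalars_apply_eq, mul_comm] using hball y hy'

theorem eq_of_eventually_hasSum_mul_pow
    (h : ∀ᶠ t in 𝓝 0, HasSum (fun n => c n * t ^ n) (f t))
    (h' : ∀ᶠ t in 𝓝 0, HasSum (fun n => c' n * t ^ n) (f t)) : c = c' :=
  FormalMultilinearSeries.ofScalars_series_injective (𝕜 := 𝕜) 𝕜 <|
    (hasFPowerSeriesAt_ofScalars_of_eventually_hasSum h).eq_formalMultilinearSeries
      (hasFPowerSeriesAt_ofScalars_of_eventually_hasSum h')

end PowerSeries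

section DerivSeries

variable {a : ℕ → ℝ}

theorem summable_natCast_mul_pow_pred {r : ℝ} (hr : |r| < 1) :
    Summable fun n : ℕ => (n : ℝ) * r ^ (n - 1) := by
  rw [← summable_nat_add_iff 1]
  have hnorm : ‖r‖ < 1 := by rwa [Real.norm_eq_abs]
  refine ((summable_pow_mul_geometric_of_norm_lt_one 1 hnorm).add
    (summable_geometric_of_norm_lt_one hnorm)).congr fun n => ?_
  simp only [Nat.add_sub_cancel, Nat.cast_add, Nat.cast_one, pow_one]
  ring

theorem norm_mul_natCast_mul_pow_pred_le {b y r : ℝ} (hb : |b| ≤ 1) (hy : |y| ≤ r) (n : ℕ) :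
    ‖b * (n * y ^ (n - 1))‖ ≤ n * r ^ (n - 1) := by
  rw [Real.norm_eq_abs, abs_mul, abs_mul, abs_pow, Nat.abs_cast]
  calc |b| * (n * |y| ^ (n - 1)) ≤ 1 * (n * r ^ (n - 1)) := by gcongr
    _ = n * r ^ (n - 1) := one_mul _

theorem summable_mul_pow_of_abs_le_one (ha : ∀ n, |a n| ≤ 1) {u : ℝ} (hu : |u| < 1) :
    Summable fun n => a n * u ^ n :=
  .of_norm_bounded (summable_geometric_of_abs_lt_one (by rwa [abs_abs])) fun n => by
    simpa [abs_mul, abs_pow] using mul_le_of_le_one_left (by positivity) (ha n)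

theorem summable_mul_natCast_mul_pow_pred (ha : ∀ n, |a n| ≤ 1) {u : ℝ} (hu : |u| < 1) :
    Summable fun n => a n * (n * u ^ (n - 1)) :=
  .of_norm_bounded (summable_natCast_mul_pow_pred (by rwa [abs_abs]))
    fun n => norm_mul_natCast_mul_pow_pred_le (ha n) le_rfl n

theorem hasDerivAt_tsum_mul_pow (ha : ∀ n, |a n| ≤ 1) {u : ℝ} (hu : |u| < 1) :
    HasDerivAt (fun x => ∑' n, a n * x ^ n) (∑' n, a n * (n * u ^ (n - 1))) u := by
  obtain ⟨r, hur, hr⟩ := exists_between hu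
  have hr0 : 0 < r := (abs_nonneg u).trans_lt hur
  refine hasDerivAt_tsum_of_isPreconnected (summable_natCast_mul_pow_pred (r := r)
      (by rwa [abs_of_pos hr0])) Metric.isOpen_ball (convex_ball 0 r).isPreconnected
    (fun n y _ => (hasDerivAt_pow n y).const_mul (a n)) (fun n y hy => ?_)
    (Metric.mem_ball_self hr0) (summable_mul_pow_of_abs_le_one ha (by simp))
    (by simpa using hur)
  · rw [mem_ball_zero_iff, Real.norm_eq_abs] at hy
    exact norm_mul_natCast_mul_pow_pred_le (ha n) hy.le n

end DerivSeries

theorem hasDerivAt_neg_log_one_sub_pow_div_factorial (k : ℕ) {x : ℝ} (hx : x < 1) :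
    HasDerivAt (fun y => (-log (1 - y)) ^ (k + 1) / (k + 1)!)
      ((-log (1 - x)) ^ k / k ! / (1 - x)) x := by
  have h1x : 1 - x ≠ 0 := by linarith
  have hlog : HasDerivAt (fun y => -log (1 - y)) (1 / (1 - x)) x := by
    refine (((hasDerivAt_id x).const_sub 1).log h1x).neg.congr_deriv ?_
    simp [neg_div]
  refine ((hlog.pow (k + 1)).div_const ((k + 1)! : ℝ)).congr_deriv ?_
  rw [Nat.factorial_succ, Nat.add_sub_cancel]
  push_cast
  field_simp

theorem hasDerivAt_tsum_stirlingFirst_div_factorial_mul_pow {k : ℕ} {x s : ℝ} (hx : |x| < 1)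
    (hk : HasSum (fun n => (Nat.stirlingFirst n k / n ! : ℝ) * x ^ n) s) :
    HasDerivAt (fun y => ∑' n, (Nat.stirlingFirst n (k + 1) / n ! : ℝ) * y ^ n)
      (s / (1 - x)) x := by
  set a : ℕ → ℝ := fun n => Nat.stirlingFirst n (k + 1) / (n ! : ℝ)
  set d : ℕ → ℝ := fun n => a n * (n * x ^ (n - 1))
  have ha : ∀ n, |a n| ≤ 1 := fun n => abs_stirlingFirst_div_factorial_le_one n (k + 1)
  have hd : HasSum d (∑' n, d n) := (summable_mul_natCast_mul_pow_pred ha hx).hasSum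
  have hrec : ∀ m, d (m + 1) = x * d m + (Nat.stirlingFirst m k / m ! : ℝ) * x ^ m := by
    intro m
    simp only [d, a, Nat.stirlingFirst_succ_succ, Nat.factorial_succ, Nat.add_sub_cancel]
    push_cast
    rcases m with _ | m
    · simp
    · rw [Nat.add_sub_cancel]
      field_simp
      ring
  have hshift : HasSum (fun m => x * d m + (Nat.stirlingFirst m k / m ! : ℝ) * x ^ m)
      (∑' n, d n) := by
    simp_rw [← hrec]
    exact (hasSum_nat_add_iff 1).mpr (by simpa [d] using hd)
  have hD : ∑' n, d n = x * ∑' n, d n + s := hshift.unique ((hd.mul_left x).add hk)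
  have h1x : 1 - x ≠ 0 := by linarith [(abs_lt.mp hx).2]
  convert hasDerivAt_tsum_mul_pow ha hx using 1
  rw [div_eq_iff h1x]
  linear_combination -hD

theorem hasSum_stirlingFirst_div_factorial_mul_pow (k : ℕ) {x : ℝ} (hx : |x| < 1) :
    HasSum (fun n => (Nat.stirlingFirst n k / n ! : ℝ) * x ^ n) ((-log (1 - x)) ^ k / k !) := by
  induction k generalizing x with
  | zero =>
    convert hasSum_ite_eq 0 (1 : ℝ) using 1
    · funext n
      rcases n with _ | n <;> simp
    · simp
  | succ k ih =>
    have hmem : ∀ {y : ℝ}, y ∈ Set.Ioo (-1 : ℝ) 1 → |y| < 1 := fun hy => abs_lt.mpr hy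
    have hF := fun y (hy : y ∈ Set.Ioo (-1 : ℝ) 1) =>
      hasDerivAt_tsum_stirlingFirst_div_factorial_mul_pow (hmem hy) (ih (hmem hy))
    have hG := fun y (hy : y ∈ Set.Ioo (-1 : ℝ) 1) =>
      hasDerivAt_neg_log_one_sub_pow_div_factorial k hy.2
    have hFG := isOpen_Ioo.eqOn_of_deriv_eq isPreconnected_Ioo
      (fun y hy => (hF y hy).differentiableAt.differentiableWithinAt)
      (fun y hy => (hG y hy).differentiableAt.differentiableWithinAt)
      (fun y hy => (hF y hy).deriv.trans (hG y hy).deriv.symm)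
      (show (0 : ℝ) ∈ Set.Ioo (-1) 1 by norm_num)
      (by rw [tsum_eq_single 0 fun n hn => by simp [hn]]; simp)
    convert (summable_mul_pow_of_abs_le_one
      (fun n => abs_stirlingFirst_div_factorial_le_one n (k + 1)) hx).hasSum using 1
    exact (hFG (abs_lt.mp hx)).symm

theorem abs_log_one_sub_le_neg_log_one_sub_abs {x : ℝ} (hx : |x| < 1) :
    |log (1 - x)| ≤ -log (1 - |x|) := by
  have h := (hasSum_pow_div_log_of_abs_lt_one hx).norm_le_of_bounded
    (hasSum_pow_div_log_of_abs_lt_one (x := |x|) (by rwa [abs_abs])) fun n => by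
      rw [Real.norm_eq_abs, abs_div, abs_pow, abs_of_pos (by positivity : (0 : ℝ) < n + 1)]
  rwa [Real.norm_eq_abs, abs_neg] at h

/-- The `(m, N)` term of `∑ₘ [m,k] gᵐ / m!`, with `g = -λ⁻¹ log (1 - λt)`, once each `gᵐ / m!`
is expanded in powers of `t`. -/
noncomputable def stirlingFirstCompTerm (k : ℕ) (lam t : ℝ) (p : ℕ × ℕ) : ℝ :=
  Nat.stirlingFirst p.1 k * lam⁻¹ ^ p.1 *
    (Nat.stirlingFirst p.2 p.1 / (p.2 ! : ℝ) * (lam * t) ^ p.2)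

section Composition

variable (k : ℕ) {lam t : ℝ}

theorem abs_stirlingFirstCompTerm (p : ℕ × ℕ) :
    |stirlingFirstCompTerm k lam t p| = stirlingFirstCompTerm k |lam| |t| p := by
  simp [stirlingFirstCompTerm, abs_mul, abs_div, abs_pow, abs_inv]

theorem hasSum_stirlingFirstCompTerm_row (h : |lam * t| < 1) (m : ℕ) :
    HasSum (fun N => stirlingFirstCompTerm k lam t (m, N))
      (Nat.stirlingFirst m k / (m ! : ℝ) * (lam⁻¹ * -log (1 - lam * t)) ^ m) := by
  rw [show Nat.stirlingFirst m k / (m ! : ℝ) * (lam⁻¹ * -log (1 - lam * t)) ^ m =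
      Nat.stirlingFirst m k * lam⁻¹ ^ m * ((-log (1 - lam * t)) ^ m / m !) by ring]
  exact (hasSum_stirlingFirst_div_factorial_mul_pow m h).mul_left _

theorem hasSum_stirlingFirstCompTerm_col (hlam : lam ≠ 0) (N : ℕ) :
    HasSum (fun m => stirlingFirstCompTerm k lam t (m, N))
      ((∑ m ∈ Icc k N, lam ^ (N - m) * Nat.stirlingFirst N m * Nat.stirlingFirst m k) /
        (N ! : ℝ) * t ^ N) := by
  have hval : (∑ m ∈ Icc k N, lam ^ (N - m) * Nat.stirlingFirst N m * Nat.stirlingFirst m k) /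
      (N ! : ℝ) * t ^ N = ∑ m ∈ Icc k N, stirlingFirstCompTerm k lam t (m, N) := by
    rw [sum_div, sum_mul]
    refine sum_congr rfl fun m hm => ?_
    rw [stirlingFirstCompTerm, mul_pow, ← pow_sub_mul_pow lam (mem_Icc.mp hm).2, inv_pow]
    field_simp
  rw [hval]
  refine hasSum_sum_of_ne_finset_zero fun m hm => ?_
  rcases not_and_or.mp (mem_Icc.not.mp hm) with hmk | hNm
  · simp [stirlingFirstCompTerm, Nat.stirlingFirst_eq_zero_of_lt (not_le.mp hmk)]
  · simp [stirlingFirstCompTerm, Nat.stirlingFirst_eq_zero_of_lt (not_le.mp hNm)]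

theorem summable_stirlingFirstCompTerm (h₁ : |lam| * |t| < 1)
    (h₂ : |lam|⁻¹ * -log (1 - |lam| * |t|) < 1) :
    Summable (stirlingFirstCompTerm k lam t) := by
  have hrow := hasSum_stirlingFirstCompTerm_row k (lam := |lam|) (t := |t|)
    (by rwa [abs_of_nonneg (by positivity)])
  have hg : 0 ≤ |lam|⁻¹ * -log (1 - |lam| * |t|) := by
    have : 0 ≤ |lam| * |t| := by positivity
    exact mul_nonneg (by positivity) (neg_nonneg.mpr (log_nonpos (by linarith) (by linarith)))
  rw [← summable_abs_iff]
  simp_rw [abs_stirlingFirstCompTerm]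
  refine (summable_prod_of_nonneg fun p => by unfold stirlingFirstCompTerm; positivity).mpr
    ⟨fun m => (hrow m).summable, ?_⟩
  simp_rw [(hrow _).tsum_eq]
  exact summable_mul_pow_of_abs_le_one (abs_stirlingFirst_div_factorial_le_one · k)
    (by rwa [abs_of_nonneg hg])

theorem eventually_hasSum_stirlingFirst_comp (hlam : lam ≠ 0) :
    ∀ᶠ t in 𝓝 0, HasSum
      (fun N => (∑ m ∈ Icc k N, lam ^ (N - m) * Nat.stirlingFirst N m * Nat.stirlingFirst m k) /
        (N ! : ℝ) * t ^ N)
      ((-log (1 - lam⁻¹ * -log (1 - lam * t))) ^ k / k !) := by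
  have hsmall₁ : ∀ᶠ t : ℝ in 𝓝 0, |lam| * |t| < 1 :=
    ContinuousAt.eventually_lt (by fun_prop) continuousAt_const (by simp)
  have hsmall₂ : ∀ᶠ t : ℝ in 𝓝 0, |lam|⁻¹ * -log (1 - |lam| * |t|) < 1 :=
    ContinuousAt.eventually_lt (by fun_prop (disch := simp)) continuousAt_const (by simp)
  filter_upwards [hsmall₁, hsmall₂] with t h₁ h₂
  have hlt : |lam * t| < 1 := by rwa [abs_mul]
  have hg : |lam⁻¹ * -log (1 - lam * t)| < 1 :=
    calc |lam⁻¹ * -log (1 - lam * t)| = |lam|⁻¹ * |log (1 - lam * t)| := by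
          rw [abs_mul, abs_inv, abs_neg]
      _ ≤ |lam|⁻¹ * -log (1 - |lam * t|) := by
          gcongr; exact abs_log_one_sub_le_neg_log_one_sub_abs hlt
      _ < 1 := by rwa [abs_mul]
  have hsum := (summable_stirlingFirstCompTerm k h₁ h₂).hasSum
  rw [← (hsum.prod_fiberwise (hasSum_stirlingFirstCompTerm_row k hlt)).unique
    (hasSum_stirlingFirst_div_factorial_mul_pow k hg)]
  exact ((Equiv.prodComm ℕ ℕ).hasSum_iff.mpr hsum).prod_fiberwise
    (hasSum_stirlingFirstCompTerm_col k hlam)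

end Composition

/-- **Theorem 2.1.** For a nonzero real `λ`, if `A n k = ⎡n, k⎤*_λ` are the unsigned new type
degenerate Stirling numbers of the first kind, defined by the power series expansion
`(1/k!)·log^k(1/(1 + (1/λ)·log(1 - λt))) = ∑_{n=k}^∞ ⎡n, k⎤*_λ · tⁿ/n!`, then for all
`n ≥ k ≥ 0` one has `⎡n, k⎤*_λ = ∑_{m=k}^n λ^{n-m} ⎡n, m⎤ ⎡m, k⎤`. -/
theorem new_type_deg_stirling1_eq_sum (lam : ℝ) (hlam : lam ≠ 0) (A : ℕ → ℕ → ℝ)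
    (hA : ∀ k : ℕ, ∃ ε > 0, ∀ t : ℝ, |t| < ε →
      HasSum (fun j : ℕ => A (j + k) k * t ^ (j + k) / (Nat.factorial (j + k) : ℝ))
        ((1 / (Nat.factorial k : ℝ)) *
          (Real.log (1 / (1 + (1 / lam) * Real.log (1 - lam * t)))) ^ k))
    (n k : ℕ) (hkn : k ≤ n) :
    A n k = ∑ m ∈ Finset.Icc k n,
      lam ^ (n - m) * (stirling1 n m : ℝ) * (stirling1 m k : ℝ) := by
  obtain ⟨ε, hε, hAk⟩ := hA k
  have hAseries : ∀ᶠ t in 𝓝 (0 : ℝ),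
      HasSum (fun N => (if k ≤ N then A N k / (N ! : ℝ) else 0) * t ^ N)
        ((-log (1 - lam⁻¹ * -log (1 - lam * t))) ^ k / k !) := by
    filter_upwards [Metric.ball_mem_nhds 0 hε] with t ht
    rw [← hasSum_nat_add_iff' k, sum_eq_zero fun N hN => by simp [(mem_range.mp hN).not_ge],
      sub_zero]
    have hval : (-log (1 - lam⁻¹ * -log (1 - lam * t))) ^ k / k ! =
        1 / (k ! : ℝ) * log (1 / (1 + 1 / lam * log (1 - lam * t))) ^ k := by
      rw [show 1 + 1 / lam * log (1 - lam * t) = 1 - lam⁻¹ * -log (1 - lam * t) by ring,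
        one_div (1 - _), log_inv]
      ring
    rw [hval]
    refine (hAk t (by simpa using ht)).congr_fun fun j => ?_
    simp only [le_add_iff_nonneg_left, zero_le, if_true]
    ring
  have hcoeff := congrFun (eq_of_eventually_hasSum_mul_pow hAseries
    (eventually_hasSum_stirlingFirst_comp k hlam)) n
  rw [if_pos hkn, div_left_inj' (by positivity)] at hcoeff
  simpa [stirling1_eq_stirlingFirst] using hcoeff
end

section
/- Let λ be a nonzero real number and let t be a real number with 1 + λt > 0 and (1/λ)·log(1 + λt) < 1. Then ∫₀¹ ∫₀^∞ e^{−x(1 − (u/λ)·log(1+λt))} dx du = log( 1 / (1 − (1/λ)·log(1+λt)) ) / ( (1/λ)·log(1+λt) ), provided (1/λ)·log(1+λt) ≠ 0. Equivalently, if U is a uniform random variable on (0,1) and X is an independent exponential random variable with parameter 1, then E[e_λ^{UX}(t)] = log( 1 / (1 − (1/λ)·log(1+λt)) ) / ( (1/λ)·log(1+λt) ). -/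
open MeasureTheory Real

/-!
Writing `c = (1/λ)·log(1+λt)`, the inner integral is the Laplace transform of `1` at
`1 - cu > 0`, i.e. `(1 - cu)⁻¹`, and the substitution `v = 1 - cu` turns the outer
integral into `c⁻¹ ∫_{1-c}^1 dv/v = c⁻¹ log(1/(1-c))`.
-/

lemma integral_exp_neg_mul_Ioi_zero {b : ℝ} (hb : 0 < b) :
    ∫ x in Set.Ioi (0 : ℝ), exp (-x * b) = b⁻¹ := by
  simp_rw [neg_mul, mul_comm _ b, ← neg_mul]
  rw [integral_exp_mul_Ioi (neg_lt_zero.mpr hb), mul_zero, exp_zero, neg_div_neg_eq, one_div]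

lemma one_sub_mul_pos_of_mem_Ioo {c u : ℝ} (hc : c < 1) (hu : u ∈ Set.Ioo (0 : ℝ) 1) :
    0 < 1 - c * u := by
  rcases le_or_gt c 0 with h | h
  · nlinarith [hu.1]
  · nlinarith [hu.2]

lemma integral_inv_one_sub_mul {c : ℝ} (hc : c < 1) (hc0 : c ≠ 0) :
    ∫ u in (0 : ℝ)..1, (1 - c * u)⁻¹ = log (1 / (1 - c)) / c := by
  rw [intervalIntegral.integral_comp_sub_mul (fun v : ℝ => v⁻¹) hc0, mul_one, mul_zero, sub_zero,
    integral_inv_of_pos (by linarith) one_pos, smul_eq_mul, inv_mul_eq_div]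

theorem integral_deg_exp_uniform_exponential_general (lam t : ℝ)
    (h2 : (1 / lam) * Real.log (1 + lam * t) < 1)
    (h3 : (1 / lam) * Real.log (1 + lam * t) ≠ 0) :
    ∫ u in Set.Ioo (0 : ℝ) 1, ∫ x in Set.Ioi (0 : ℝ),
        Real.exp (-x * (1 - (u / lam) * Real.log (1 + lam * t)))
      = Real.log (1 / (1 - (1 / lam) * Real.log (1 + lam * t))) /
          ((1 / lam) * Real.log (1 + lam * t)) := by
  set c := (1 / lam) * Real.log (1 + lam * t)
  calc ∫ u in Set.Ioo (0 : ℝ) 1, ∫ x in Set.Ioi (0 : ℝ),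
          Real.exp (-x * (1 - (u / lam) * Real.log (1 + lam * t)))
      = ∫ u in Set.Ioo (0 : ℝ) 1, (1 - c * u)⁻¹ := by
        refine setIntegral_congr_fun measurableSet_Ioo fun u hu => ?_
        rw [← integral_exp_neg_mul_Ioi_zero (one_sub_mul_pos_of_mem_Ioo h2 hu)]
        congr! 4
        ring
    _ = ∫ u in (0 : ℝ)..1, (1 - c * u)⁻¹ := by
        rw [intervalIntegral.integral_of_le zero_le_one, integral_Ioc_eq_integral_Ioo]
    _ = Real.log (1 / (1 - c)) / c := integral_inv_one_sub_mul h2 h3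

/-- **Equation (11).** Let `λ` be a nonzero real number and `t` a real number with
`1 + λt > 0`, `(1/λ)·log(1+λt) < 1` and `(1/λ)·log(1+λt) ≠ 0`. Then
`∫₀¹ ∫₀^∞ e^{-x(1-(u/λ)·log(1+λt))} dx du
  = log(1/(1-(1/λ)·log(1+λt))) / ((1/λ)·log(1+λt))`.
Equivalently, `E[e_λ^{UX}(t)]` equals the right-hand side, where `U` is uniform on `(0,1)`
and `X` is an independent exponential random variable with parameter `1`. -/
theorem integral_deg_exp_uniform_exponential (lam t : ℝ) (hlam : lam ≠ 0)
    (h1 : 0 < 1 + lam * t) (h2 : (1 / lam) * Real.log (1 + lam * t) < 1)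
    (h3 : (1 / lam) * Real.log (1 + lam * t) ≠ 0) :
    ∫ u in Set.Ioo (0 : ℝ) 1, ∫ x in Set.Ioi (0 : ℝ),
        Real.exp (-x * (1 - (u / lam) * Real.log (1 + lam * t)))
      = Real.log (1 / (1 - (1 / lam) * Real.log (1 + lam * t))) /
          ((1 / lam) * Real.log (1 + lam * t)) :=
  integral_deg_exp_uniform_exponential_general lam t h2 h3
end

section
/- Let λ be a nonzero real number, k ≥ 1 an integer, and t a real number with 1 + λt > 0, (1/λ)·log(1 + λt) < 1, and (1/λ)·log(1+λt) ≠ 0. Let (U_j)_{1≤j≤k} be i.i.d. uniform random variables on (0,1) and (X_j)_{1≤j≤k} be i.i.d. exponential random variables with parameter 1, all mutually independent, and set S_k = U₁X₁ + ⋯ + U_kX_k. Then E[e_λ^{S_k}(t)] = ( 1 / ((1/λ)·log(1+λt)) )^k · log^k( 1 / (1 − (1/λ)·log(1+λt)) ). -/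
/-!
With `c = log (1 + λt) / λ` the integrand is `exp (c S_k)`, so the expectation is the moment
generating function of `S_k` at `c`. The pairs `(U_j, X_j)` are independent, hence so are the
products `U_j X_j`, and the mgf factors into `k` copies of `E[exp (c U X)]`. Integrating out the
exponential variable first gives `E[(1 - c U)⁻¹] = ∫₀¹ du / (1 - c u) = c⁻¹ log (1 / (1 - c))`.
-/

open MeasureTheory ProbabilityTheory Finset Real

lemma ProbabilityTheory.iIndepFun.prodMk_sumElim {Ω ι β : Type*} [MeasurableSpace Ω]
    [MeasurableSpace β] {μ : Measure Ω} [Fintype ι] {f g : ι → Ω → β}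
    (h : iIndepFun (Sum.elim f g) μ) (hf : ∀ i, AEMeasurable (f i) μ)
    (hg : ∀ i, AEMeasurable (g i) μ) :
    iIndepFun (fun i ω ↦ (f i ω, g i ω)) μ := by
  have := h.isProbabilityMeasure
  have hfg : ∀ j, AEMeasurable (Sum.elim f g j) μ := Sum.rec hf hg
  have hpair (i : ι) : μ.map (fun ω ↦ (f i ω, g i ω)) = (μ.map (f i)).prod (μ.map (g i)) :=
    (indepFun_iff_map_prod_eq_prod_map_map (hf i) (hg i)).1 (h.indepFun Sum.inl_ne_inr)
  set e := (MeasurableEquiv.arrowProdEquivProdArrow β β ι).symm ∘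
    MeasurableEquiv.sumPiEquivProdPi (fun _ ↦ β)
  have he : MeasurePreserving e (Measure.pi fun j ↦ μ.map (Sum.elim f g j))
      (Measure.pi fun i ↦ (μ.map (f i)).prod (μ.map (g i))) :=
    (measurePreserving_arrowProdEquivProdArrow β β ι _ _).symm.comp
      (measurePreserving_sumPiEquivProdPi _)
  rw [iIndepFun_iff_map_fun_eq_pi_map fun i ↦ (hf i).prodMk (hg i)]
  calc μ.map (fun ω i ↦ (f i ω, g i ω))
      = (μ.map fun ω j ↦ Sum.elim f g j ω).map e := by
        rw [AEMeasurable.map_map_of_aemeasurable he.measurable.aemeasurable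
          (aemeasurable_pi_lambda _ hfg)]
        rfl
    _ = Measure.pi fun i ↦ (μ.map (f i)).prod (μ.map (g i)) := by
        rw [h.map_fun_eq_pi_map hfg, he.map_eq]
    _ = Measure.pi fun i ↦ μ.map (fun ω ↦ (f i ω, g i ω)) := by simp_rw [hpair]

lemma ProbabilityTheory.HasLaw.of_map_eq {Ω 𝓧 : Type*} [MeasurableSpace Ω] [MeasurableSpace 𝓧]
    {P : Measure Ω} {μ : Measure 𝓧} {X : Ω → 𝓧} (hμ : μ ≠ 0) (h : P.map X = μ) :
    HasLaw X μ P :=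
  ⟨.of_map_ne_zero (h ▸ hμ), h⟩

lemma integral_expMeasure {r : ℝ} (hr : 0 ≤ r) (g : ℝ → ℝ) :
    ∫ x, g x ∂expMeasure r = ∫ x in Set.Ioi 0, r * exp (-(r * x)) * g x := by
  rw [expMeasure, gammaMeasure, integral_withDensity_eq_integral_toReal_smul (f := gammaPDF 1 r)
    (measurable_gammaPDFReal 1 r).ennreal_ofReal (.of_forall fun _ ↦ ENNReal.ofReal_lt_top),
    ← integral_Ici_eq_integral_Ioi, ← integral_indicator measurableSet_Ici]
  congr 1 with x
  by_cases hx : 0 ≤ x <;> simp [gammaPDF, gammaPDFReal, hx, hr, (exp_pos _).le]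

lemma integral_exp_mul_expMeasure {r b : ℝ} (hr : 0 < r) (hb : b < r) :
    ∫ x, exp (b * x) ∂expMeasure r = r / (r - b) := by
  have h (x : ℝ) : r * exp (-(r * x)) * exp (b * x) = r * exp ((b - r) * x) := by
    rw [mul_assoc, ← exp_add]; ring_nf
  simp_rw [integral_expMeasure hr.le, h, integral_const_mul, integral_exp_mul_Ioi (sub_neg.2 hb),
    mul_zero, exp_zero, neg_div, ← div_neg, neg_sub, mul_one_div]

lemma integrable_exp_mul_expMeasure {r b : ℝ} (hr : 0 < r) (hb : b < r) :
    Integrable (fun x ↦ exp (b * x)) (expMeasure r) :=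
  .of_integral_ne_zero <| by
    rw [integral_exp_mul_expMeasure hr hb]
    exact (div_pos hr (sub_pos.2 hb)).ne'

lemma one_sub_mul_pos {c u : ℝ} (hc : c < 1) (hu₀ : 0 ≤ u) (hu₁ : u ≤ 1) : 0 < 1 - c * u := by
  rcases le_or_gt c 0 with h | h <;> nlinarith

lemma integral_inv_one_sub_mul_Ioo {c : ℝ} (hc₁ : c < 1) (hc₀ : c ≠ 0) :
    ∫ u in Set.Ioo 0 1, (1 - c * u)⁻¹ = c⁻¹ * log (1 / (1 - c)) := by
  rw [← integral_Ioc_eq_integral_Ioo, ← intervalIntegral.integral_of_le zero_le_one,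
    intervalIntegral.integral_comp_sub_mul (fun x ↦ x⁻¹) hc₀, mul_zero, sub_zero, mul_one,
    integral_inv_of_pos (sub_pos.2 hc₁) one_pos, smul_eq_mul]

lemma integral_exp_mul_mul_uniform_prod_expMeasure {c : ℝ} (hc₁ : c < 1) (hc₀ : c ≠ 0) :
    ∫ p : ℝ × ℝ, exp (c * (p.1 * p.2)) ∂(volume.restrict (Set.Ioo 0 1)).prod (expMeasure 1) =
      c⁻¹ * log (1 / (1 - c)) := by
  have := isProbabilityMeasure_expMeasure one_pos
  have hcu (u : ℝ) (hu : u ∈ Set.Ioo 0 1) : c * u < 1 :=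
    sub_pos.1 (one_sub_mul_pos hc₁ hu.1.le hu.2.le)
  have hinner : Set.EqOn (fun u ↦ ∫ x, exp (c * (u * x)) ∂expMeasure 1) (fun u ↦ (1 - c * u)⁻¹)
      (Set.Ioo 0 1) := fun u hu ↦ by
    simp_rw [← mul_assoc, integral_exp_mul_expMeasure one_pos (hcu u hu), one_div]
  have houter : IntegrableOn (fun u ↦ (1 - c * u)⁻¹) (Set.Ioo 0 1) :=
    (ContinuousOn.integrableOn_Icc (ContinuousOn.inv₀ (by fun_prop)
      fun u hu ↦ (one_sub_mul_pos hc₁ hu.1 hu.2).ne')).mono_set Set.Ioo_subset_Icc_self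
  have hint : Integrable (fun p : ℝ × ℝ ↦ exp (c * (p.1 * p.2)))
      ((volume.restrict (Set.Ioo 0 1)).prod (expMeasure 1)) := by
    refine (integrable_prod_iff (by fun_prop)).2 ⟨?_, ?_⟩
    · refine ae_restrict_of_forall_mem measurableSet_Ioo fun u hu ↦ ?_
      simpa only [← mul_assoc] using integrable_exp_mul_expMeasure one_pos (hcu u hu)
    · refine houter.congr_fun (fun u hu ↦ ?_) measurableSet_Ioo
      simp_rw [norm_of_nonneg (exp_pos _).le]
      exact (hinner hu).symm
  rw [integral_prod _ hint, setIntegral_congr_fun measurableSet_Ioo hinner,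
    integral_inv_one_sub_mul_Ioo hc₁ hc₀]

lemma mgf_mul_of_uniform_of_expMeasure {Ω : Type*} [MeasurableSpace Ω] {P : Measure Ω}
    {V Y : Ω → ℝ} (hV : HasLaw V (volume.restrict (Set.Ioo 0 1)) P) (hY : HasLaw Y (expMeasure 1) P)
    (hVY : IndepFun V Y P) {c : ℝ} (hc₁ : c < 1) (hc₀ : c ≠ 0) :
    mgf (fun ω ↦ V ω * Y ω) P c = c⁻¹ * log (1 / (1 - c)) := by
  have := isProbabilityMeasure_expMeasure one_pos
  have := hY.isProbabilityMeasure
  rw [← integral_exp_mul_mul_uniform_prod_expMeasure hc₁ hc₀]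
  exact (hVY.hasLaw_prod hV hY).integral_comp (f := fun p ↦ exp (c * (p.1 * p.2))) (by fun_prop)

theorem expectation_deg_exp_Sk_general
    {Ω : Type*} [MeasurableSpace Ω] (P : Measure Ω)
    (lam : ℝ) (k : ℕ) (t : ℝ)
    (h1 : 0 < 1 + lam * t) (h2 : (1 / lam) * Real.log (1 + lam * t) < 1)
    (h3 : (1 / lam) * Real.log (1 + lam * t) ≠ 0)
    (U X : Fin k → Ω → ℝ)
    (hindep : iIndepFun (m := fun _ : Fin k ⊕ Fin k => (inferInstance : MeasurableSpace ℝ))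
      (Sum.elim U X) P)
    (hU : ∀ j, Measure.map (U j) P = volume.restrict (Set.Ioo (0 : ℝ) 1))
    (hX : ∀ j, Measure.map (X j) P = expMeasure 1) :
    ∫ ω, (1 + lam * t) ^ ((∑ j, U j ω * X j ω) / lam) ∂P =
      (1 / ((1 / lam) * Real.log (1 + lam * t))) ^ k *
        (Real.log (1 / (1 - (1 / lam) * Real.log (1 + lam * t)))) ^ k := by
  set c := (1 / lam) * Real.log (1 + lam * t)
  have hUlaw (j : Fin k) : HasLaw (U j) (volume.restrict (Set.Ioo 0 1)) P :=
    .of_map_eq (by simp) (hU j)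
  have hXlaw (j : Fin k) : HasLaw (X j) (expMeasure 1) P :=
    .of_map_eq (isProbabilityMeasure_expMeasure one_pos).ne_zero (hX j)
  have hprod : iIndepFun (fun j ω ↦ U j ω * X j ω) P :=
    (hindep.prodMk_sumElim (fun j ↦ (hUlaw j).aemeasurable) fun j ↦ (hXlaw j).aemeasurable).comp
      (fun _ p ↦ p.1 * p.2) fun _ ↦ by fun_prop
  calc ∫ ω, (1 + lam * t) ^ ((∑ j, U j ω * X j ω) / lam) ∂P
      = mgf (∑ j, fun ω ↦ U j ω * X j ω) P c := by
        refine integral_congr_ae (.of_forall fun ω ↦ ?_)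
        simp only [rpow_def_of_pos h1, Finset.sum_apply, c]
        ring_nf
    _ = ∏ j : Fin k, c⁻¹ * log (1 / (1 - c)) := by
        rw [hprod.mgf_sum₀ (fun j ↦ by fun_prop)]
        exact prod_congr rfl fun j _ ↦ mgf_mul_of_uniform_of_expMeasure (hUlaw j) (hXlaw j)
          (hindep.indepFun Sum.inl_ne_inr) h2 h3
    _ = _ := by rw [prod_const, card_univ, Fintype.card_fin, mul_pow, one_div c]

/-- **Equation (12).** Let `λ ≠ 0`, `k ≥ 1`, and let `t` be real with `1 + λt > 0`,
`(1/λ)·log(1+λt) < 1` and `(1/λ)·log(1+λt) ≠ 0`. Let `U₁, …, U_k` be i.i.d. uniform random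
variables on `(0,1)` and `X₁, …, X_k` i.i.d. exponential random variables with parameter `1`,
all mutually independent, and `S_k = U₁X₁ + ⋯ + U_kX_k`. Then, with
`e_λ^x(t) = (1+λt)^{x/λ}`, one has
`E[e_λ^{S_k}(t)] = (1/((1/λ)·log(1+λt)))^k · log^k(1/(1-(1/λ)·log(1+λt)))`. -/
theorem expectation_deg_exp_Sk
    {Ω : Type*} [MeasurableSpace Ω] (P : Measure Ω) [IsProbabilityMeasure P]
    (lam : ℝ) (hlam : lam ≠ 0) (k : ℕ) (hk : 1 ≤ k) (t : ℝ)
    (h1 : 0 < 1 + lam * t) (h2 : (1 / lam) * Real.log (1 + lam * t) < 1)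
    (h3 : (1 / lam) * Real.log (1 + lam * t) ≠ 0)
    (U X : Fin k → Ω → ℝ)
    (hindep : iIndepFun (m := fun _ : Fin k ⊕ Fin k => (inferInstance : MeasurableSpace ℝ))
      (Sum.elim U X) P)
    (hU : ∀ j, Measure.map (U j) P = volume.restrict (Set.Ioo (0 : ℝ) 1))
    (hX : ∀ j, Measure.map (X j) P = expMeasure 1) :
    ∫ ω, (1 + lam * t) ^ ((∑ j, U j ω * X j ω) / lam) ∂P =
      (1 / ((1 / lam) * Real.log (1 + lam * t))) ^ k *
        (Real.log (1 / (1 - (1 / lam) * Real.log (1 + lam * t)))) ^ k :=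
  expectation_deg_exp_Sk_general P lam k t h1 h2 h3 U X hindep hU hX
end

section
/- Let n, k be integers with n ≥ k ≥ 1. Let (U_j)_{1≤j≤k} be i.i.d. uniform random variables on (0,1) and (X_j)_{1≤j≤k} be i.i.d. exponential random variables with parameter 1, all mutually independent, and set S_k = U₁X₁ + ⋯ + U_kX_k. Then the unsigned Stirling number of the first kind satisfies [n,k] = C(n,k) · E[S_k^{n−k}]. -/
/-!
Expanding the power and using independence, `E[S_k^m]` is the sum over `d₁ + ⋯ + d_k = m` of
`m! / (d₁! ⋯ d_k!) · ∏ E[U^{d_j}] E[X^{d_j}] = m! ∏ 1 / (d_j + 1)`, since `E[U^d] = 1 / (d + 1)`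
and `E[X^d] = d!`. That sum is the coefficient of `t^(m + k)` in `L^k`, where
`L = ∑ tⁿ / n = log (1 / (1 - t))`, and `k! [n, k] / n!` is the coefficient of `tⁿ` in `L^k`:
both satisfy the recurrence of `[n, k]`, the power series because `(1 - t) L' = 1` gives
`(1 - t) (L^(k+1))' = (k + 1) L^k`.
-/

open MeasureTheory ProbabilityTheory Finset

open Nat PowerSeries

namespace PowerSeries

variable {K : Type*} [Field K] [CharZero K]

/-- The expansion of `log (1 / (1 - t))`; the junk value `0⁻¹ = 0` gives the zero constant term. -/
noncomputable def logSeries : K⟦X⟧ := mk fun n ↦ (n : K)⁻¹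

@[simp] lemma constantCoeff_logSeries : constantCoeff (logSeries : K⟦X⟧) = 0 := by
  simp [logSeries, ← coeff_zero_eq_constantCoeff_apply]

lemma derivative_logSeries : d⁄dX K (logSeries : K⟦X⟧) = mk 1 := by
  ext n
  rw [logSeries, coeff_derivative, coeff_mk, coeff_mk]
  push_cast
  exact inv_mul_cancel₀ n.cast_add_one_ne_zero

lemma logSeries_eq_X_mul : (logSeries : K⟦X⟧) = X * mk fun n ↦ ((n : K) + 1)⁻¹ := by
  ext n
  rcases n with _ | n
  · simp [logSeries]
  · simp [logSeries, coeff_succ_X_mul]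

lemma coeff_one_sub_X_mul_derivative (f : K⟦X⟧) (n : ℕ) :
    coeff n ((1 - X) * d⁄dX K f) = (n + 1) * coeff (n + 1) f - n * coeff n f := by
  rcases n with _ | n
  · simpa [sub_mul] using coeff_derivative f 0
  · rw [sub_mul, one_mul, map_sub, coeff_succ_X_mul, coeff_derivative, coeff_derivative]
    push_cast
    ring

/-- The coefficient form of `(1 - t) (L ^ (k + 1))' = (k + 1) L ^ k`, where `(1 - t) L' = 1`. -/
lemma succ_mul_coeff_logSeries_pow (n k : ℕ) :
    (k + 1) * coeff n (logSeries ^ k : K⟦X⟧) =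
      (n + 1) * coeff (n + 1) (logSeries ^ (k + 1)) - n * coeff n (logSeries ^ (k + 1)) := by
  rw [← coeff_one_sub_X_mul_derivative, derivative_pow, mul_left_comm, derivative_logSeries,
    mul_comm (1 - X), mk_one_mul_one_sub_eq_one, add_tsub_cancel_right, mul_one,
    ← map_natCast (C (R := K)) (k + 1), coeff_C_mul]
  push_cast
  ring

lemma factorial_mul_stirling1 (n k : ℕ) :
    (k ! * stirling1 n k : K) = n ! * coeff n (logSeries ^ k : K⟦X⟧) := by
  induction k generalizing n with
  | zero => cases n <;> simp [stirling1, coeff_one]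
  | succ k ihk =>
    induction n with
    | zero => simp [stirling1, coeff_zero_eq_constantCoeff]
    | succ n ihn =>
      have hrec := succ_mul_coeff_logSeries_pow (K := K) n k
      simp only [stirling1, factorial_succ] at ihn ⊢
      push_cast at ihn ⊢
      linear_combination n * ihn + (n ! : K) * hrec + (k + 1) * ihk n

lemma coeff_logSeries_pow {ι : Type*} [Fintype ι] [DecidableEq ι] (m : ℕ) :
    coeff (m + Fintype.card ι) (logSeries ^ Fintype.card ι : K⟦X⟧) =
      ∑ d ∈ piAntidiag (univ : Finset ι) m, ∏ j, ((d j : K) + 1)⁻¹ := by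
  rw [logSeries_eq_X_mul, mul_pow, coeff_X_pow_mul, ← Finset.card_univ, ← prod_const, coeff_prod]
  simp only [finsuppAntidiag, sum_map, coeff_mk]
  exact sum_attach (piAntidiag univ m) fun d ↦ ∏ j, ((d j : K) + 1)⁻¹

end PowerSeries

lemma integral_pow_uniform_Ioo (d : ℕ) : ∫ x in Set.Ioo (0 : ℝ) 1, x ^ d = ((d : ℝ) + 1)⁻¹ := by
  rw [← integral_Ioc_eq_integral_Ioo, ← intervalIntegral.integral_of_le zero_le_one, integral_pow]
  simp

open Real in
lemma integral_pow_expMeasure {r : ℝ} (hr : 0 < r) (d : ℕ) :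
    ∫ x, x ^ d ∂expMeasure r = d ! / r ^ d := by
  have hmeas : Measurable (exponentialPDF r) := (measurable_exponentialPDFReal r).ennreal_ofReal
  have hpdf (x : ℝ) : (exponentialPDF r x).toReal • x ^ d =
      (Set.Ici 0).indicator (fun x ↦ r * (x ^ ((d + 1 : ℝ) - 1) * exp (-(r * x)))) x := by
    by_cases hx : 0 ≤ x
    · rw [Set.indicator_of_mem (Set.mem_Ici.2 hx), exponentialPDF_of_nonneg hx,
        ENNReal.toReal_ofReal (by positivity), add_sub_cancel_right, rpow_natCast, smul_eq_mul]
      ring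
    · rw [Set.indicator_of_notMem (mt Set.mem_Ici.1 hx), exponentialPDF_of_neg (not_le.1 hx)]
      simp
  change ∫ x, x ^ d ∂volume.withDensity (exponentialPDF r) = _
  rw [integral_withDensity_eq_integral_toReal_smul hmeas
    (ae_of_all _ fun _ ↦ ENNReal.ofReal_lt_top)]
  simp_rw [hpdf]
  rw [integral_indicator measurableSet_Ici, integral_Ici_eq_integral_Ioi, integral_const_mul,
    integral_rpow_mul_exp_neg_mul_Ioi (by positivity) hr, Gamma_nat_eq_factorial,
    ← Nat.cast_add_one, rpow_natCast, one_div, inv_pow, pow_succ]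
  field_simp

namespace ProbabilityTheory

variable {Ω : Type*} [MeasurableSpace Ω] {P : Measure Ω}

lemma iIndepFun.integrable_fun_prod_comp {𝕜 : Type*} [RCLike 𝕜] {ι : Type*} [Fintype ι]
    {𝓧 : ι → Type*} {m𝓧 : ∀ i, MeasurableSpace (𝓧 i)} {X : (i : ι) → Ω → 𝓧 i}
    {f : (i : ι) → 𝓧 i → 𝕜} (hX : iIndepFun X P) (mX : ∀ i, AEMeasurable (X i) P)
    (hf : ∀ i, Integrable (f i) (P.map (X i))) :
    Integrable (fun ω ↦ ∏ i, f i (X i ω)) P := by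
  have := hX.isProbabilityMeasure
  have := fun i ↦ Measure.isProbabilityMeasure_map (mX i)
  have h := Integrable.fintype_prod_dep hf
  rw [← hX.map_fun_eq_pi_map mX] at h
  exact h.comp_aemeasurable (aemeasurable_pi_lambda _ mX)

variable {ι : Type*} [Fintype ι] [DecidableEq ι] {U X : ι → Ω → ℝ}

lemma iIndepFun.integral_sum_mul_pow (hUX : iIndepFun (Sum.elim U X) P)
    (mU : ∀ i, AEMeasurable (U i) P) (mX : ∀ i, AEMeasurable (X i) P)
    (hU : ∀ i d, Integrable (fun x : ℝ ↦ x ^ d) (P.map (U i)))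
    (hX : ∀ i d, Integrable (fun x : ℝ ↦ x ^ d) (P.map (X i))) (m : ℕ) :
    ∫ ω, (∑ i, U i ω * X i ω) ^ m ∂P =
      ∑ d ∈ piAntidiag univ m, multinomial univ d *
        ∏ i, (∫ ω, U i ω ^ d i ∂P) * ∫ ω, X i ω ^ d i ∂P := by
  have mUX : ∀ p, AEMeasurable (Sum.elim U X p) P := by rintro (i | i) <;> simp [mU, mX]
  have hprod (d : ι → ℕ) (ω : Ω) : ∏ i, (U i ω * X i ω) ^ d i =
      ∏ p, (fun p (x : ℝ) ↦ x ^ Sum.elim d d p) p (Sum.elim U X p ω) := by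
    simp [Fintype.prod_sum_type, mul_pow, prod_mul_distrib]
  have hint (d : ι → ℕ) := hUX.integrable_fun_prod_comp mUX
    (f := fun p (x : ℝ) ↦ x ^ Sum.elim d d p) (by rintro (i | i) <;> simp [hU, hX])
  simp_rw [sum_pow_eq_sum_piAntidiag, hprod]
  rw [integral_finsetSum _ fun d _ ↦ (hint d).const_mul _]
  refine sum_congr rfl fun d _ ↦ ?_
  rw [integral_const_mul, hUX.integral_fun_prod_comp mUX
    fun _ ↦ (continuous_pow _).aestronglyMeasurable, Fintype.prod_sum_type, prod_mul_distrib]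
  rfl

lemma iIndepFun.integral_sum_uniform_mul_exp_pow (hUX : iIndepFun (Sum.elim U X) P)
    (hU : ∀ i, P.map (U i) = volume.restrict (Set.Ioo (0 : ℝ) 1))
    (hX : ∀ i, P.map (X i) = expMeasure 1) (m : ℕ) :
    ∫ ω, (∑ i, U i ω * X i ω) ^ m ∂P =
      m ! * ∑ d ∈ piAntidiag (univ : Finset ι) m, ∏ i, ((d i : ℝ) + 1)⁻¹ := by
  have := isProbabilityMeasure_expMeasure (r := 1) one_pos
  have mU i : AEMeasurable (U i) P := .of_map_ne_zero <| by simp [hU i, Measure.restrict_eq_zero]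
  have mX i : AEMeasurable (X i) P :=
    .of_map_ne_zero <| hX i ▸ IsProbabilityMeasure.ne_zero _
  have momentU i (d : ℕ) : ∫ ω, U i ω ^ d ∂P = ((d : ℝ) + 1)⁻¹ := by
    rw [← integral_map (mU i) (continuous_pow d).aestronglyMeasurable, hU i,
      integral_pow_uniform_Ioo]
  have momentX i (d : ℕ) : ∫ ω, X i ω ^ d ∂P = d ! := by
    rw [← integral_map (mX i) (continuous_pow d).aestronglyMeasurable, hX i,
      integral_pow_expMeasure one_pos, one_pow, div_one]
  rw [hUX.integral_sum_mul_pow mU mX (fun i d ↦ .of_integral_ne_zero ?_)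
    (fun i d ↦ .of_integral_ne_zero ?_), mul_sum]
  · refine sum_congr rfl fun d hd ↦ ?_
    simp_rw [momentU, momentX, prod_mul_distrib]
    rw [← (mem_piAntidiag.1 hd).1, ← Nat.multinomial_spec]
    push_cast
    ring
  · rw [hU i, integral_pow_uniform_Ioo]
    positivity
  · rw [hX i, integral_pow_expMeasure one_pos]
    positivity

end ProbabilityTheory

theorem unsigned_stirling1_eq_choose_mul_expectation_general
    {Ω : Type*} [MeasurableSpace Ω] (P : Measure Ω) [IsProbabilityMeasure P]
    (n k : ℕ) (hkn : k ≤ n)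
    (U X : Fin k → Ω → ℝ)
    (hindep : iIndepFun (m := fun _ : Fin k ⊕ Fin k => (inferInstance : MeasurableSpace ℝ))
      (Sum.elim U X) P)
    (hU : ∀ j, Measure.map (U j) P = volume.restrict (Set.Ioo (0 : ℝ) 1))
    (hX : ∀ j, Measure.map (X j) P = expMeasure 1) :
    (stirling1 n k : ℝ) =
      (n.choose k : ℝ) * ∫ ω, (∑ j, U j ω * X j ω) ^ (n - k) ∂P := by
  obtain ⟨m, rfl⟩ := Nat.exists_eq_add_of_le' hkn
  have hcoeff := coeff_logSeries_pow (K := ℝ) (ι := Fin k) m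
  rw [Fintype.card_fin] at hcoeff
  have hstirling := factorial_mul_stirling1 (K := ℝ) (m + k) k
  rw [hcoeff, ← Nat.add_choose_mul_factorial_mul_factorial] at hstirling
  rw [add_tsub_cancel_right, iIndepFun.integral_sum_uniform_mul_exp_pow hindep hU hX]
  push_cast at hstirling
  refine mul_left_cancel₀ (by positivity : (k ! : ℝ) ≠ 0) ?_
  linear_combination hstirling

/-- **Adell–Lekuona.** Let `n ≥ k ≥ 1`, let `U₁, …, U_k` be i.i.d. uniform random variables
on `(0,1)` and `X₁, …, X_k` i.i.d. exponential random variables with parameter `1`, all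
mutually independent, and let `S_k = U₁X₁ + ⋯ + U_kX_k`. Then
`⎡n, k⎤ = C(n,k) · E[S_k^{n-k}]`. -/
theorem unsigned_stirling1_eq_choose_mul_expectation
    {Ω : Type*} [MeasurableSpace Ω] (P : Measure Ω) [IsProbabilityMeasure P]
    (n k : ℕ) (hk : 1 ≤ k) (hkn : k ≤ n)
    (U X : Fin k → Ω → ℝ)
    (hindep : iIndepFun (m := fun _ : Fin k ⊕ Fin k => (inferInstance : MeasurableSpace ℝ))
      (Sum.elim U X) P)
    (hU : ∀ j, Measure.map (U j) P = volume.restrict (Set.Ioo (0 : ℝ) 1))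
    (hX : ∀ j, Measure.map (X j) P = expMeasure 1) :
    (stirling1 n k : ℝ) =
      (n.choose k : ℝ) * ∫ ω, (∑ j, U j ω * X j ω) ^ (n - k) ∂P :=
  unsigned_stirling1_eq_choose_mul_expectation_general P n k hkn U X hindep hU hX
end

section
/- For all integers n, k with n ≥ k ≥ 0, the unsigned new type degenerate Stirling number of the first kind converges to the classical unsigned Stirling number of the first kind as λ → 0: lim_{λ→0} [n,k]*_λ = [n,k]. -/
open Finset Filter Topology

lemma stirling1_eq_zero : ∀ n k : ℕ, n < k → stirling1 n k = 0
  | 0, _ + 1, _ => rfl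
  | n + 1, k + 1, h => by
    have h' : n < k + 1 := Nat.lt_of_succ_lt h
    show n * stirling1 n (k + 1) + stirling1 n k = 0
    rw [stirling1_eq_zero n (k + 1) h', stirling1_eq_zero n k (Nat.lt_of_succ_lt_succ h)]
    simp

lemma stirling1_self (n : ℕ) : stirling1 n n = 1 := by
  induction n with
  | zero => rfl
  | succ n ih =>
    show n * stirling1 n (n + 1) + stirling1 n n = 1
    rw [stirling1_eq_zero n (n + 1) (Nat.lt_succ_self n), ih]
    simp

/-- For `n ≥ k ≥ 0`, the unsigned new type degenerate Stirling numbers of the first kind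
`⎡n, k⎤*_λ = ∑_{m=k}^n λ^{n-m} ⎡n, m⎤ ⎡m, k⎤` (defined for nonzero `λ`) converge to the
classical unsigned Stirling number of the first kind `⎡n, k⎤` as `λ → 0`. -/
theorem tendsto_new_type_deg_stirling1 (n k : ℕ) (hkn : k ≤ n) :
    Tendsto
      (fun lam : ℝ => ∑ m ∈ Finset.Icc k n,
        lam ^ (n - m) * (stirling1 n m : ℝ) * (stirling1 m k : ℝ))
      (𝓝[≠] (0 : ℝ)) (𝓝 ((stirling1 n k : ℝ))) := by
  have hc : Continuous (fun lam : ℝ => ∑ m ∈ Finset.Icc k n,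
      lam ^ (n - m) * (stirling1 n m : ℝ) * (stirling1 m k : ℝ)) := by
    continuity
  refine Tendsto.mono_left (hc.tendsto' 0 _ ?_) nhdsWithin_le_nhds
  rw [Finset.sum_eq_single n]
  · simp [stirling1_self]
  · intro m hm hne
    have : 0 < n - m := Nat.sub_pos_of_lt (lt_of_le_of_ne (Finset.mem_Icc.mp hm).2 hne)
    simp [zero_pow this.ne']
  · intro h; exact absurd (Finset.mem_Icc.mpr ⟨hkn, le_rfl⟩) h
end
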